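/- arXiv:1611.04623 — 6 statements merged into one kernel-verified Lean document; each statement's English description precedes it below -/
import Mathlib

section
/- Let X be a normed linear space and Y a metric space. If there exists a map f : X → Y whose compression modulus ρ_f(t) = inf{d_Y(f(x₁),f(x₂)) : d_X(x₁,x₂) ≥ t} satisfies lim_{t→∞} ρ_f(t) = ∞, then the density character of X is at most the density character of Y. -/
/-! Since `ρ_f → ∞`, some `T` has `ρ_f(T) > 1`, so points of `X` whose images are at distance
`< 1` are at distance `< T`. Lifting a dense subset `D` of `Y` through `f` therefore gives a
`T`-net `N` of `X` with `#N ≤ #D`. In a normed space the rescaled nets `(n + 1)⁻¹ • N` together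
form a dense set of cardinality `ℵ₀ * #N`, which is `#N` unless `N` is finite; and a finite net
makes `X` bounded, hence `X = 0`. -/

open ENNReal NNReal Set Filter ZeroAtInfty

/-- `U` is a cover of the space. -/
def IsCover {X : Type*} (U : Set (Set X)) : Prop := ⋃₀ U = Set.univ

/-- `U` is point-finite: every point lies in only finitely many members. -/
def PointFinite {X : Type*} (U : Set (Set X)) : Prop :=
  ∀ x : X, {V | V ∈ U ∧ x ∈ V}.Finite

/-- The Lebesgue number of a family of sets. -/
noncomputable def Leb {X : Type*} [PseudoMetricSpace X] (U : Set (Set X)) : ℝ≥0∞ :=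
  sSup {d : ℝ≥0∞ | ∀ E : Set X, EMetric.diam E < d → ∃ V ∈ U, E ⊆ V}

/-- The diameter of a family of sets: the sup of the diameters of its members. -/
noncomputable def covDiam {X : Type*} [PseudoMetricSpace X] (U : Set (Set X)) : ℝ≥0∞ :=
  ⨆ V ∈ U, EMetric.diam V

/-- The modulus `Δ_X^{(c)}`. -/
noncomputable def Δc (X : Type*) [PseudoMetricSpace X] (R : ℝ≥0∞) : ℝ≥0∞ :=
  ⨅ U ∈ {U : Set (Set X) | IsCover U ∧ PointFinite U ∧ R ≤ Leb U}, covDiam U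

/-- The modulus `Δ_X^{(u)}`. -/
noncomputable def Δu (X : Type*) [PseudoMetricSpace X] (r : ℝ≥0∞) : ℝ≥0∞ :=
  ⨆ U ∈ {U : Set (Set X) | IsCover U ∧ PointFinite U ∧ covDiam U ≤ r}, Leb U

/-- The density character: the least cardinality of a dense subset. -/
noncomputable def densChar (X : Type*) [TopologicalSpace X] : Cardinal :=
  sInf {c : Cardinal | ∃ s : Set X, Dense s ∧ Cardinal.mk s = c}

/-- The modulus of continuity (expansion) of a map. -/
noncomputable def omegaMod {X Y : Type*} [PseudoMetricSpace X] [PseudoMetricSpace Y]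
    (f : X → Y) (t : ℝ) : ℝ≥0∞ :=
  ⨆ p ∈ {p : X × X | dist p.1 p.2 ≤ t}, edist (f p.1) (f p.2)

/-- The modulus of compression of a map. -/
noncomputable def rhoMod {X Y : Type*} [PseudoMetricSpace X] [PseudoMetricSpace Y]
    (f : X → Y) (t : ℝ) : ℝ≥0∞ :=
  ⨅ p ∈ {p : X × X | t ≤ dist p.1 p.2}, edist (f p.1) (f p.2)

universe u v

open Cardinal Metric

section Density

variable {X : Type*} [TopologicalSpace X]

theorem densChar_le_mk_of_dense {s : Set X} (hs : Dense s) : densChar X ≤ #s :=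
  csInf_le' ⟨s, hs, rfl⟩

theorem exists_dense_mk_eq_densChar : ∃ s : Set X, Dense s ∧ #s = densChar X :=
  csInf_mem (⟨#(univ : Set X), univ, dense_univ, rfl⟩ :
    {c : Cardinal | ∃ s : Set X, Dense s ∧ #s = c}.Nonempty)

end Density

section PseudoMetric

variable {X Y : Type*} [PseudoMetricSpace X] [PseudoMetricSpace Y]

theorem dist_lt_of_edist_lt_rhoMod {f : X → Y} {t : ℝ} {x₁ x₂ : X}
    (h : edist (f x₁) (f x₂) < rhoMod f t) : dist x₁ x₂ < t := by
  by_contra! ht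
  exact (iInf₂_le (x₁, x₂) ht : rhoMod f t ≤ _).not_gt h

theorem isBounded_univ_of_finite_net {N : Set X} {T : ℝ} (hN : N.Finite)
    (hnet : ∀ x, ∃ y ∈ N, dist x y < T) : Bornology.IsBounded (univ : Set X) := by
  refine ((Bornology.isBounded_biUnion hN).2 fun y _ => isBounded_ball (x := y) (r := T)).subset ?_
  intro x _
  obtain ⟨y, hyN, hy⟩ := hnet x
  exact mem_biUnion hyN hy

end PseudoMetric

theorem exists_net_mk_le_densChar {X Y : Type u} [PseudoMetricSpace X] [PseudoMetricSpace Y]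
    {f : X → Y} {T : ℝ} (hT : 1 < rhoMod f T) :
    ∃ N : Set X, #N ≤ densChar Y ∧ ∀ x, ∃ y ∈ N, dist x y < T := by
  obtain ⟨D, hD, hDcard⟩ := exists_dense_mk_eq_densChar (X := Y)
  let D' : Set Y := {d ∈ D | ∃ x, dist d (f x) < 1 / 2}
  choose g hg using fun d : D' => d.2.2
  refine ⟨range g, ?_, fun x => ?_⟩
  · calc #(range g) ≤ #D' := mk_range_le
      _ ≤ #D := mk_le_mk_of_subset fun _ hd => hd.1
      _ = densChar Y := hDcard
  obtain ⟨d, hd, hdD⟩ := Metric.dense_iff.1 hD (f x) (1 / 2) one_half_pos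
  rw [mem_ball] at hd
  let d' : D' := ⟨d, hdD, x, hd⟩
  refine ⟨g d', mem_range_self _, dist_lt_of_edist_lt_rhoMod (hT.trans_le' ?_)⟩
  have hfar : dist (f x) (f (g d')) < 1 := by
    linarith [dist_triangle_left (f x) (f (g d')) d, hg d']
  exact (edist_lt_ofReal.2 hfar).trans_eq ofReal_one |>.le

section NormedSpace

variable {X : Type u} [NormedAddCommGroup X] [NormedSpace ℝ X] {N : Set X} {T : ℝ}

theorem dense_range_inv_succ_smul_of_net (hnet : ∀ x, ∃ y ∈ N, dist x y < T) :
    Dense (range fun p : ℕ × N => ((p.1 : ℝ) + 1)⁻¹ • (p.2 : X)) := by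
  refine Metric.dense_iff.2 fun x r hr => ?_
  obtain ⟨n, hn⟩ := exists_nat_gt (T / r)
  obtain ⟨y, hyN, hy⟩ := hnet (((n : ℝ) + 1) • x)
  have hn₀ : (0 : ℝ) < (n : ℝ) + 1 := by positivity
  refine ⟨((n : ℝ) + 1)⁻¹ • y, ?_, (n, ⟨y, hyN⟩), rfl⟩
  rw [mem_ball, dist_comm]
  calc dist x (((n : ℝ) + 1)⁻¹ • y)
      = ((n : ℝ) + 1)⁻¹ * dist (((n : ℝ) + 1) • x) y := by
        conv_lhs => rw [← inv_smul_smul₀ hn₀.ne' x]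
        rw [dist_smul₀, Real.norm_of_nonneg (inv_pos.2 hn₀).le]
    _ < ((n : ℝ) + 1)⁻¹ * T := by gcongr
    _ < r := by
        rw [inv_mul_lt_iff₀ hn₀]
        rw [div_lt_iff₀ hr] at hn
        linarith

theorem densChar_le_mk_of_net (hnet : ∀ x, ∃ y ∈ N, dist x y < T) : densChar X ≤ #N := by
  rcases lt_or_ge #N ℵ₀ with hfin | hinf
  · have : Subsingleton X := not_nontrivial_iff_subsingleton.1 fun _ =>
      NormedSpace.unbounded_univ ℝ X
        (isBounded_univ_of_finite_net (lt_aleph0_iff_set_finite.1 hfin) hnet)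
    obtain ⟨y, hy, -⟩ := hnet 0
    refine densChar_le_mk_of_dense ?_
    rw [Subsingleton.eq_univ_of_nonempty ⟨y, hy⟩]
    exact dense_univ
  · calc densChar X ≤ _ := densChar_le_mk_of_dense (dense_range_inv_succ_smul_of_net hnet)
      _ ≤ #(ℕ × N) := mk_range_le
      _ = #N := by simp [mk_prod, hinf]

end NormedSpace

theorem stmt0 {X : Type u} {Y : Type u} [NormedAddCommGroup X] [NormedSpace ℝ X] [MetricSpace Y]
    (f : X → Y) (hf : Tendsto (rhoMod f) atTop (nhds ⊤)) :
    densChar X ≤ densChar Y := by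
  obtain ⟨T, hT⟩ := (hf.eventually (eventually_gt_nhds one_lt_top)).exists
  obtain ⟨N, hN, hnet⟩ := exists_net_mk_le_densChar hT
  exact (densChar_le_mk_of_net hnet).trans hN
end

section
/- A metric space X has the uniform Stone property (every cover with positive Lebesgue number admits a point-finite refinement with positive Lebesgue number) if and only if Δ_X^{(u)}(r) > 0 for all r > 0, where Δ_X^{(u)}(r) = sup{ℒ(𝒰) : 𝒰 is a point-finite cover of X with diam(𝒰) ≤ r}. -/
open ENNReal NNReal Set Filter ZeroAtInfty

/-!
If `Δu X r > 0`, then for a uniform cover `U` pick `0 < r < ℒ(U)`: a point-finite uniform cover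
`V` of diameter at most `r` refines `U`, since each member of `V` has diameter below `ℒ(U)`.
Conversely, the cover by balls of radius `r / 2` is uniform, so it has a point-finite uniform
refinement, whose diameter is at most `r`; its Lebesgue number is a lower bound for `Δu X r`.
-/

def Refines {X : Type*} (V U : Set (Set X)) : Prop := ∀ W ∈ V, ∃ W' ∈ U, W ⊆ W'

section Covers

variable {X : Type*} [PseudoMetricSpace X]

theorem le_leb {U : Set (Set X)} {d : ℝ≥0∞}
    (h : ∀ E : Set X, Metric.ediam E < d → ∃ V ∈ U, E ⊆ V) : d ≤ Leb U :=
  le_sSup h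

theorem exists_subset_of_ediam_lt_leb {U : Set (Set X)} {E : Set X}
    (hE : Metric.ediam E < Leb U) : ∃ V ∈ U, E ⊆ V := by
  obtain ⟨d, hd, hEd⟩ := lt_sSup_iff.mp hE
  exact hd E hEd

theorem ediam_le_covDiam {U : Set (Set X)} {V : Set X} (hV : V ∈ U) :
    Metric.ediam V ≤ covDiam U :=
  le_iSup₂ (f := fun B (_ : B ∈ U) => Metric.ediam B) V hV

theorem covDiam_le_of_refines {U V : Set (Set X)} (hVU : Refines V U) :
    covDiam V ≤ covDiam U :=
  iSup₂_le fun W hW => by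
    obtain ⟨W', hW', hWW'⟩ := hVU W hW
    exact (Metric.ediam_mono hWW').trans (ediam_le_covDiam hW')

theorem refines_of_covDiam_lt_leb {U V : Set (Set X)} (h : covDiam V < Leb U) :
    Refines V U :=
  fun _ hW => exists_subset_of_ediam_lt_leb ((ediam_le_covDiam hW).trans_lt h)

theorem leb_le_Δu {V : Set (Set X)} {r : ℝ≥0∞} (hcov : IsCover V) (hpf : PointFinite V)
    (hdiam : covDiam V ≤ r) : Leb V ≤ Δu X r :=
  le_iSup₂ (f := fun U (_ : U ∈ {U : Set (Set X) | IsCover U ∧ PointFinite U ∧ covDiam U ≤ r}) =>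
    Leb U) V ⟨hcov, hpf, hdiam⟩

theorem exists_of_pos_Δu {r : ℝ≥0∞} (h : 0 < Δu X r) :
    ∃ V : Set (Set X), IsCover V ∧ PointFinite V ∧ covDiam V ≤ r ∧ 0 < Leb V := by
  obtain ⟨V, hV⟩ := lt_iSup_iff.mp h
  obtain ⟨⟨hcov, hpf, hdiam⟩, hleb⟩ := lt_iSup_iff.mp hV
  exact ⟨V, hcov, hpf, hdiam, hleb⟩

variable (X) in
/-- `∅` is included so that the Lebesgue number is `≥ ε` even when `X` is empty. -/
def ballCover (ε : ℝ≥0∞) : Set (Set X) := insert ∅ (range fun x => Metric.eball x ε)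

theorem isCover_ballCover {ε : ℝ≥0∞} (hε : 0 < ε) : IsCover (ballCover X ε) :=
  eq_univ_of_forall fun x => ⟨_, Or.inr ⟨x, rfl⟩, Metric.mem_eball_self hε⟩

theorem le_leb_ballCover (ε : ℝ≥0∞) : ε ≤ Leb (ballCover X ε) := by
  refine le_leb fun E hE => ?_
  rcases E.eq_empty_or_nonempty with rfl | ⟨x, hx⟩
  · exact ⟨∅, Or.inl rfl, subset_rfl⟩
  · exact ⟨_, Or.inr ⟨x, rfl⟩, fun y hy => (Metric.edist_le_ediam_of_mem hy hx).trans_lt hE⟩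

theorem covDiam_ballCover_le (ε : ℝ≥0∞) : covDiam (ballCover X ε) ≤ 2 * ε :=
  iSup₂_le fun B hB => by
    rcases hB with rfl | ⟨x, rfl⟩
    · exact Metric.ediam_empty.trans_le zero_le
    · exact Metric.ediam_eball_le

end Covers

theorem stmt2 {X : Type*} [MetricSpace X] :
    (∀ U : Set (Set X), IsCover U → 0 < Leb U →
      ∃ V : Set (Set X), IsCover V ∧ PointFinite V ∧ 0 < Leb V ∧
        ∀ W ∈ V, ∃ W' ∈ U, W ⊆ W') ↔
    (∀ r : ℝ≥0, 0 < r → 0 < Δu X r) := by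
  constructor
  · intro hStone r hr
    have hε : (0 : ℝ≥0∞) < r / 2 := ENNReal.half_pos (by exact_mod_cast hr.ne')
    obtain ⟨V, hcov, hpf, hleb, hVU⟩ := hStone (ballCover X (r / 2)) (isCover_ballCover hε)
      (hε.trans_le (le_leb_ballCover _))
    have hdiam : covDiam V ≤ r :=
      calc covDiam V ≤ covDiam (ballCover X (r / 2)) := covDiam_le_of_refines hVU
        _ ≤ 2 * (r / 2) := covDiam_ballCover_le _
        _ = r := ENNReal.mul_div_cancel' (by norm_num) (by norm_num)
    exact hleb.trans_le (leb_le_Δu hcov hpf hdiam)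
  · intro hΔ U _ hU
    obtain ⟨r, hr, hrU⟩ := ENNReal.lt_iff_exists_nnreal_btwn.mp hU
    obtain ⟨V, hcov, hpf, hdiam, hleb⟩ := exists_of_pos_Δu (hΔ r (by exact_mod_cast hr))
    exact ⟨V, hcov, hpf, hleb, refines_of_covDiam_lt_leb (hdiam.trans_lt hrU)⟩
end

section
/- A metric space X has the uniform Stone property (Δ_X^{(u)}(r) > 0 for all r > 0) if and only if lim_{R→0} Δ_X^{(c)}(R) = 0. -/
open ENNReal NNReal Set Filter ZeroAtInfty

/-! The two moduli are dual to each other: a point-finite cover witnessing `R < Δu X r` also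
witnesses `Δc X R ≤ r`, and one witnessing `Δc X R < r` also witnesses `R ≤ Δu X r`. -/

section Duality

variable {X : Type*} [PseudoMetricSpace X] {R r : ℝ≥0∞}

theorem Δc_le_of_lt_Δu (h : R < Δu X r) : Δc X R ≤ r := by
  obtain ⟨U, hU⟩ := lt_iSup_iff.mp h
  obtain ⟨⟨hcover, hfinite, hdiam⟩, hleb⟩ := lt_iSup_iff.mp hU
  calc Δc X R ≤ covDiam U := iInf₂_le U ⟨hcover, hfinite, hleb.le⟩
    _ ≤ r := hdiam

theorem le_Δu_of_Δc_lt (h : Δc X R < r) : R ≤ Δu X r := by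
  obtain ⟨U, hU⟩ := iInf_lt_iff.mp h
  obtain ⟨⟨hcover, hfinite, hleb⟩, hdiam⟩ := iInf_lt_iff.mp hU
  calc R ≤ Leb U := hleb
    _ ≤ Δu X r := le_iSup₂ (f := fun U _ => Leb U) U ⟨hcover, hfinite, hdiam.le⟩

end Duality

theorem stmt6 {X : Type*} [MetricSpace X] :
    (∀ r : ℝ≥0, 0 < r → 0 < Δu X r) ↔
    Tendsto (Δc X) (nhdsWithin 0 (Set.Ioi 0)) (nhds 0) := by
  constructor
  · intro hpos
    refine ENNReal.tendsto_nhds_zero.mpr fun ε hε => ?_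
    obtain ⟨r, hr, hrε⟩ := ENNReal.lt_iff_exists_nnreal_btwn.mp hε
    have hsmall : ∀ᶠ R in nhdsWithin (0 : ℝ≥0∞) (Set.Ioi 0), R < Δu X r :=
      nhdsWithin_le_nhds (Iio_mem_nhds (hpos r (mod_cast hr)))
    filter_upwards [hsmall] with R hR
    exact (Δc_le_of_lt_Δu hR).trans hrε.le
  · intro hlim r hr
    have : (nhdsWithin (0 : ℝ≥0∞) (Set.Ioi 0)).NeBot :=
      nhdsGT_neBot_of_exists_gt ⟨∞, ENNReal.coe_lt_top⟩
    obtain ⟨R, hΔc, hR⟩ :=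
      ((hlim.eventually_lt_const (mod_cast hr : (0 : ℝ≥0∞) < r)).and self_mem_nhdsWithin).exists
    exact lt_of_lt_of_le hR (le_Δu_of_Δc_lt hΔc)
end

section
/- A metric space X has the coarse Stone property (Δ_X^{(c)}(R) < ∞ for all R) if and only if lim_{r→∞} Δ_X^{(u)}(r) = ∞. -/
open ENNReal NNReal Set Filter ZeroAtInfty

theorem stmt7 {X : Type*} [MetricSpace X] :
    (∀ R : ℝ≥0, Δc X R < ⊤) ↔
    Tendsto (fun r : ℝ≥0 => Δu X r) atTop (nhds ⊤) := by
  rw [ENNReal.tendsto_nhds_top_iff_nnreal]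
  constructor
  · intro h R
    have hfin := h (R + 1)
    filter_upwards [eventually_gt_atTop (Δc X ↑(R + 1)).toNNReal] with r hr
    have hΔc : Δc X ↑(R + 1) < r := by
      rw [← ENNReal.coe_toNNReal hfin.ne]
      exact_mod_cast hr
    calc (R : ℝ≥0∞) < ↑(R + 1) := by exact_mod_cast lt_add_one R
      _ ≤ Δu X r := le_Δu_of_Δc_lt hΔc
  · intro h R
    obtain ⟨r, hr⟩ := (h R).exists
    exact (Δc_le_of_lt_Δu hr).trans_lt coe_lt_top
end

section
/- Let X be a metric space. If there exist C < 1 and D ∈ [0,∞) such that Δ_X^{(c)}(R) ≤ CR + D for all R ∈ [0,∞), then diam(X) ≤ D/(1−C). -/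
open ENNReal NNReal Set Filter ZeroAtInfty

/-!
Two points at distance `t < R` form a set of diameter `t`, which any cover with Lebesgue
number `≥ R` must swallow in a single member; hence `t ≤ Δc X R`. Under the linear bound this
gives `t ≤ C (t + ε) + D` for every `ε > 0`, so `t ≤ C t + D`, i.e. `t ≤ D / (1 - C)`.
-/

theorem edist_le_covDiam_of_edist_lt_Leb {X : Type*} [PseudoMetricSpace X] {U : Set (Set X)}
    {x y : X} (h : edist x y < Leb U) : edist x y ≤ covDiam U := by
  rw [← Metric.ediam_pair] at h ⊢
  obtain ⟨d, hd, hlt⟩ := lt_sSup_iff.mp h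
  obtain ⟨V, hVU, hxyV⟩ := hd _ hlt
  calc Metric.ediam {x, y} ≤ Metric.ediam V := Metric.ediam_mono hxyV
    _ ≤ covDiam U := le_iSup₂ (f := fun V (_ : V ∈ U) => Metric.ediam V) V hVU

theorem edist_le_Δc {X : Type*} [PseudoMetricSpace X] {x y : X} {R : ℝ≥0∞}
    (h : edist x y < R) : edist x y ≤ Δc X R :=
  le_iInf₂ fun _ hU => edist_le_covDiam_of_edist_lt_Leb (h.trans_le hU.2.2)

theorem NNReal.le_div_one_sub_of_le_mul_add {t C D : ℝ≥0} (hC : C < 1) (h : t ≤ C * t + D) :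
    t ≤ D / (1 - C) := by
  rw [le_div_iff₀ (tsub_pos_of_lt hC), mul_tsub, mul_one, tsub_le_iff_right, mul_comm, add_comm]
  exact h

theorem stmt8 {X : Type*} [MetricSpace X] (C D : ℝ≥0) (hC : C < 1)
    (h : ∀ R : ℝ≥0, Δc X R ≤ ((C * R + D : ℝ≥0) : ℝ≥0∞)) :
    EMetric.diam (Set.univ : Set X) ≤ ((D / (1 - C) : ℝ≥0) : ℝ≥0∞) := by
  refine Metric.ediam_le fun x _ y _ => ?_
  rw [edist_nndist, ENNReal.coe_le_coe]
  refine NNReal.le_div_one_sub_of_le_mul_add hC (le_of_forall_pos_le_add fun ε hε => ?_)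
  have hlt : edist x y < ((nndist x y + ε : ℝ≥0) : ℝ≥0∞) := by
    rw [edist_nndist, ENNReal.coe_lt_coe]
    exact lt_add_of_pos_right _ hε
  have hbound : nndist x y ≤ C * (nndist x y + ε) + D := by
    have := (edist_le_Δc hlt).trans (h _)
    rwa [edist_nndist, ENNReal.coe_le_coe] at this
  calc nndist x y ≤ C * (nndist x y + ε) + D := hbound
    _ ≤ C * nndist x y + D + ε := by
      rw [mul_add, add_right_comm]
      gcongr
      exact mul_le_of_le_one_left ε.2 hC.le
end

section
/- For a normed linear space X, the coarse Stone property and the uniform Stone property are equivalent; moreover each is equivalent to the existence of C ∈ [0,∞) with Δ_X^{(c)}(R) ≤ CR for all R, and to Δ_X^{(c)}(R) < ∞ for some R ∈ (0,∞). -/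
open ENNReal NNReal Set Filter ZeroAtInfty

/-!
Everything reduces to the existence of a single point-finite cover `U` with positive Lebesgue
number `L` and finite diameter `D`. Scaling by `t > 0` is a bijective dilation of ratio `t`, so `t • U`
is again a point-finite cover, with Lebesgue number at least `t * L` and diameter at most `t * D`.
This gives `Δc (t * L) ≤ t * D` and `Δu (t * D) ≥ t * L` for all `t > 0`.
-/

open scoped Pointwise

section Scaling

variable {α β : Type*} [GroupWithZero α] [MulAction α β] {U : Set (Set β)} {c : α}

lemma IsCover.smul (hU : IsCover U) (hc : c ≠ 0) : IsCover (c • U) := by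
  rw [IsCover, ← Set.image_smul, Set.sUnion_image, ← Set.smul_set_sUnion, hU, Set.smul_set_univ₀ hc]

lemma PointFinite.smul (hU : PointFinite U) (hc : c ≠ 0) : PointFinite (c • U) := by
  intro x
  refine ((hU (c⁻¹ • x)).image (c • ·)).subset ?_
  rintro _ ⟨⟨V, hV, rfl⟩, hx⟩
  exact ⟨V, ⟨hV, (Set.mem_smul_set_iff_inv_smul_mem₀ hc V x).1 hx⟩, rfl⟩

end Scaling

section NormedScaling

variable {𝕜 E : Type*} [NormedDivisionRing 𝕜] [SeminormedAddCommGroup E] [Module 𝕜 E]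
  [NormSMulClass 𝕜 E]

lemma covDiam_smul (c : 𝕜) (U : Set (Set E)) : covDiam (c • U) = ‖c‖₊ * covDiam U := by
  rw [covDiam, covDiam, ← Set.image_smul, iSup_image]
  simp only [EMetric.diam, ediam_smul₀, ENNReal.smul_def, smul_eq_mul, ENNReal.mul_iSup]

lemma nnnorm_mul_leb_le_leb_smul {c : 𝕜} (hc : c ≠ 0) (U : Set (Set E)) :
    ‖c‖₊ * Leb U ≤ Leb (c • U) := by
  rw [Leb, ENNReal.mul_sSup]
  refine iSup₂_le fun d hd => le_sSup fun S hS => ?_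
  have hdiam : Metric.ediam (c⁻¹ • S) < d := by
    rw [ediam_smul₀, nnnorm_inv, ENNReal.smul_def, smul_eq_mul,
      ENNReal.coe_inv (nnnorm_ne_zero_iff.2 hc), mul_comm, ← div_eq_mul_inv]
    exact ENNReal.div_lt_of_lt_mul' hS
  obtain ⟨V, hV, hSV⟩ := hd _ hdiam
  exact ⟨c • V, Set.smul_mem_smul_set hV, (Set.subset_smul_set_iff₀ hc).2 hSV⟩

end NormedScaling

section Moduli

variable {X : Type*} [PseudoMetricSpace X] {U : Set (Set X)}

lemma Δc_le_covDiam {R : ℝ≥0∞} (hU : IsCover U) (hU' : PointFinite U) (hR : R ≤ Leb U) :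
    Δc X R ≤ covDiam U :=
  iInf₂_le U ⟨hU, hU', hR⟩

lemma leb_le_Δu_s11 {r : ℝ≥0∞} (hU : IsCover U) (hU' : PointFinite U) (hr : covDiam U ≤ r) :
    Leb U ≤ Δu X r :=
  le_iSup₂ (f := fun U (_ : U ∈ {U : Set (Set X) | IsCover U ∧ PointFinite U ∧ covDiam U ≤ r}) =>
    Leb U) U ⟨hU, hU', hr⟩

lemma Δc_zero : Δc X 0 = 0 := by
  refine le_antisymm ((Δc_le_covDiam (U := Set.range ({·})) ?_ ?_ zero_le).trans ?_) zero_le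
  · rw [IsCover, Set.sUnion_range, Set.iUnion_of_singleton]
  · intro x
    refine (Set.finite_singleton {x}).subset ?_
    rintro _ ⟨⟨y, rfl⟩, hx⟩
    rw [Set.mem_singleton_iff.1 hx]
    rfl
  · refine iSup₂_le ?_
    rintro _ ⟨y, rfl⟩
    exact Metric.ediam_singleton.le

variable (X) in
def HasBoundedLebesgueCover : Prop :=
  ∃ U : Set (Set X), IsCover U ∧ PointFinite U ∧ 0 < Leb U ∧ covDiam U < ⊤

lemma hasBoundedLebesgueCover_of_Δc_lt_top {R : ℝ≥0∞} (hR : 0 < R) (h : Δc X R < ⊤) :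
    HasBoundedLebesgueCover X := by
  simp only [Δc, iInf_lt_iff] at h
  obtain ⟨U, ⟨hU, hU', hRU⟩, hdiam⟩ := h
  exact ⟨U, hU, hU', hR.trans_le hRU, hdiam⟩

lemma hasBoundedLebesgueCover_of_Δu_pos {r : ℝ≥0∞} (hr : r < ⊤) (h : 0 < Δu X r) :
    HasBoundedLebesgueCover X := by
  simp only [Δu, lt_iSup_iff] at h
  obtain ⟨U, ⟨hU, hU', hdiam⟩, hleb⟩ := h
  exact ⟨U, hU, hU', hleb, hdiam.trans_lt hr⟩

lemma HasBoundedLebesgueCover.exists_bounds (h : HasBoundedLebesgueCover X) :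
    ∃ U : Set (Set X), IsCover U ∧ PointFinite U ∧
      ∃ L D : ℝ≥0, 0 < L ∧ 0 < D ∧ (L : ℝ≥0∞) ≤ Leb U ∧ covDiam U ≤ D := by
  obtain ⟨U, hU, hU', hleb, hdiam⟩ := h
  obtain ⟨L, hL, hLU⟩ : ∃ L : ℝ≥0, 0 < L ∧ (L : ℝ≥0∞) ≤ Leb U := by
    obtain ⟨L, hLU, hL⟩ := ENNReal.lt_iff_exists_nnreal_btwn.1 hleb
    exact ⟨L, by exact_mod_cast hLU, hL.le⟩
  refine ⟨U, hU, hU', L, (covDiam U).toNNReal + 1, hL, by positivity, hLU, ?_⟩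
  rw [ENNReal.coe_add, ENNReal.coe_toNNReal hdiam.ne]
  exact le_self_add

end Moduli

section NormedSpace

variable {X : Type*} [SeminormedAddCommGroup X] [NormedSpace ℝ X] {U : Set (Set X)}

lemma coe_mul_le_leb_smul {t L : ℝ≥0} (ht : (t : ℝ) ≠ 0) (hL : (L : ℝ≥0∞) ≤ Leb U) :
    ((t * L : ℝ≥0) : ℝ≥0∞) ≤ Leb ((t : ℝ) • U) := by
  calc ((t * L : ℝ≥0) : ℝ≥0∞) ≤ ‖(t : ℝ)‖₊ * Leb U := by
        rw [NNReal.nnnorm_eq, ENNReal.coe_mul]; gcongr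
    _ ≤ Leb ((t : ℝ) • U) := nnnorm_mul_leb_le_leb_smul ht U

lemma covDiam_smul_le {t D : ℝ≥0} (hD : covDiam U ≤ D) :
    covDiam ((t : ℝ) • U) ≤ ((t * D : ℝ≥0) : ℝ≥0∞) := by
  rw [covDiam_smul, NNReal.nnnorm_eq, ENNReal.coe_mul]
  gcongr

lemma HasBoundedLebesgueCover.Δc_le_mul (h : HasBoundedLebesgueCover X) :
    ∃ C : ℝ≥0, ∀ R : ℝ≥0, Δc X R ≤ ((C * R : ℝ≥0) : ℝ≥0∞) := by
  obtain ⟨U, hU, hU', L, D, hL, -, hLU, hDU⟩ := h.exists_bounds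
  refine ⟨D / L, fun R => ?_⟩
  rcases eq_or_ne R 0 with rfl | hR
  · simp [Δc_zero]
  have ht : ((R / L : ℝ≥0) : ℝ) ≠ 0 := by positivity
  calc Δc X R = Δc X ((R / L * L : ℝ≥0) : ℝ≥0∞) := by rw [div_mul_cancel₀ R hL.ne']
    _ ≤ covDiam (((R / L : ℝ≥0) : ℝ) • U) :=
        Δc_le_covDiam (hU.smul ht) (hU'.smul ht) (coe_mul_le_leb_smul ht hLU)
    _ ≤ ((R / L * D : ℝ≥0) : ℝ≥0∞) := covDiam_smul_le hDU
    _ = ((D / L * R : ℝ≥0) : ℝ≥0∞) := by rw [div_mul_comm, mul_comm]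

lemma HasBoundedLebesgueCover.Δu_pos (h : HasBoundedLebesgueCover X) {r : ℝ≥0} (hr : 0 < r) :
    0 < Δu X r := by
  obtain ⟨U, hU, hU', L, D, hL, hD, hLU, hDU⟩ := h.exists_bounds
  have ht : ((r / D : ℝ≥0) : ℝ) ≠ 0 := by positivity
  calc (0 : ℝ≥0∞) < ((r / D * L : ℝ≥0) : ℝ≥0∞) := by positivity
    _ ≤ Leb (((r / D : ℝ≥0) : ℝ) • U) := coe_mul_le_leb_smul ht hLU
    _ ≤ Δu X ((r / D * D : ℝ≥0) : ℝ≥0∞) :=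
        leb_le_Δu_s11 (hU.smul ht) (hU'.smul ht) (covDiam_smul_le hDU)
    _ = Δu X r := by rw [div_mul_cancel₀ r hD.ne']

end NormedSpace

theorem stmt11 {X : Type*} [NormedAddCommGroup X] [NormedSpace ℝ X] :
    ((∀ R : ℝ≥0, Δc X R < ⊤) ↔ (∀ r : ℝ≥0, 0 < r → 0 < Δu X r)) ∧
    ((∀ R : ℝ≥0, Δc X R < ⊤) ↔
      ∃ C : ℝ≥0, ∀ R : ℝ≥0, Δc X R ≤ ((C * R : ℝ≥0) : ℝ≥0∞)) ∧
    ((∀ R : ℝ≥0, Δc X R < ⊤) ↔ ∃ R : ℝ≥0, 0 < R ∧ Δc X R < ⊤) := by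
  have of_linear (h : ∃ C : ℝ≥0, ∀ R : ℝ≥0, Δc X R ≤ ((C * R : ℝ≥0) : ℝ≥0∞)) (R : ℝ≥0) :
      Δc X R < ⊤ :=
    let ⟨C, hC⟩ := h
    (hC R).trans_lt ENNReal.coe_lt_top
  have coarse_iff : (∀ R : ℝ≥0, Δc X R < ⊤) ↔ HasBoundedLebesgueCover X :=
    ⟨fun h => hasBoundedLebesgueCover_of_Δc_lt_top (by simp) (h 1),
      fun h => of_linear h.Δc_le_mul⟩
  refine ⟨coarse_iff.trans ⟨fun h _ => h.Δu_pos, fun h => ?_⟩,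
    coarse_iff.trans ⟨HasBoundedLebesgueCover.Δc_le_mul, fun h => coarse_iff.1 (of_linear h)⟩,
    ⟨fun h => ⟨1, one_pos, h 1⟩, fun ⟨R, hR, h⟩ => coarse_iff.2 ?_⟩⟩
  · exact hasBoundedLebesgueCover_of_Δu_pos ENNReal.one_lt_top (h 1 one_pos)
  · exact hasBoundedLebesgueCover_of_Δc_lt_top (by exact_mod_cast hR) h
end
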